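/- arXiv:2102.05122 — 2 statements merged into one kernel-verified Lean document; each statement's English description precedes it below -/
import Mathlib

section
/- (Powers–Størmer inequality for α = 1/2) For positive semidefinite matrices A and B, 2·Tr(A^{1/2} B^{1/2}) ≥ Tr(A + B − |A − B|), where |M| denotes the positive square root of MᵀM. -/
open Matrix

namespace Matrix.PosSemidef

open scoped ComplexOrder

/-- The positive semidefinite square root of a positive semidefinite matrix
(as defined in Mathlib of December 2024, since removed). -/
noncomputable def sqrt {n : Type*} [Fintype n] [DecidableEq n] {𝕜 : Type*} [RCLike 𝕜]
    {A : Matrix n n 𝕜} (hA : PosSemidef A) : Matrix n n 𝕜 :=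
  hA.1.eigenvectorUnitary.1 * diagonal ((↑) ∘ (√·) ∘ hA.1.eigenvalues) *
  (star hA.1.eigenvectorUnitary : Matrix n n 𝕜)

end Matrix.PosSemidef

/-! With `S = A^{1/2}`, `T = B^{1/2}`, `R = S - T` and `K = S + T` one has `-K ≤ R ≤ K`,
`RK + KR = 2(A - B)` and `Tr(A + B) - 2 Tr(ST) = Tr(R²)`. For a unit eigenvector `v` of `R` with
eigenvalue `r` this gives `|r| ≤ ⟪v, Kv⟫` and `⟪v, (A - B)v⟫ = r ⟪v, Kv⟫`, hence
`r² ≤ |⟪v, (A - B)v⟫| ≤ ⟪v, |A - B| v⟫`; summing over an eigenbasis of `R` yields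
`Tr(R²) ≤ Tr|A - B|`. -/

section CFCAbs

variable {A : Type*} [NonUnitalRing A] [StarRing A] [TopologicalSpace A] [IsTopologicalRing A]
  [T2Space A] [Module ℝ A] [SMulCommClass ℝ A A] [IsScalarTower ℝ A A]
  [NonUnitalContinuousFunctionalCalculus ℝ A IsSelfAdjoint]
  [PartialOrder A] [StarOrderedRing A] [NonnegSpectrumClass ℝ A]

lemma CFC.le_abs {a : A} (ha : IsSelfAdjoint a) : a ≤ CFC.abs a :=
  sub_nonneg.mp (CFC.abs_sub_self a ha ▸ nsmul_nonneg (CFC.negPart_nonneg a) 2)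

lemma CFC.neg_abs_le {a : A} (ha : IsSelfAdjoint a) : -CFC.abs a ≤ a :=
  neg_le_iff_add_nonneg'.mpr (CFC.abs_add_self a ha ▸ nsmul_nonneg (CFC.posPart_nonneg a) 2)

end CFCAbs

open scoped MatrixOrder ComplexOrder

namespace Matrix

variable {m : Type*}

lemma diag_le_diag_of_le {M N : Matrix m m ℝ} (h : M ≤ N) (i : m) : M i i ≤ N i i :=
  sub_nonneg.mp (h.diag_nonneg (i := i))

lemma abs_diag_le_of_neg_le_of_le {M N : Matrix m m ℝ} (h₁ : -M ≤ N) (h₂ : N ≤ M) (i : m) :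
    |N i i| ≤ M i i :=
  abs_le.mpr ⟨by simpa using diag_le_diag_of_le h₁ i, diag_le_diag_of_le h₂ i⟩

variable [Fintype m] [DecidableEq m]

section Sqrt

variable {𝕜 : Type*} [RCLike 𝕜]

lemma PosSemidef.sqrt_eq_cfcSqrt {A : Matrix m m 𝕜} (hA : A.PosSemidef) :
    hA.sqrt = CFC.sqrt A := by
  rw [CFC.sqrt_eq_cfc, cfc_nnreal_eq_real _ A, hA.1.cfc_eq]
  simp only [IsHermitian.cfc, Unitary.conjStarAlgAut_apply, PosSemidef.sqrt]
  congr 2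
  ext i j
  simp [diagonal_apply, hA.eigenvalues_nonneg]

lemma PosSemidef.sqrt_mul_self {A : Matrix m m 𝕜} (hA : A.PosSemidef) :
    hA.sqrt * hA.sqrt = A := by
  rw [hA.sqrt_eq_cfcSqrt]
  exact CFC.sqrt_mul_sqrt_self A hA.nonneg

lemma PosSemidef.sqrt_nonneg {A : Matrix m m 𝕜} (hA : A.PosSemidef) : 0 ≤ hA.sqrt := by
  rw [hA.sqrt_eq_cfcSqrt]
  exact CFC.sqrt_nonneg A

lemma sqrt_conjTranspose_mul_self_eq_abs (X : Matrix m m 𝕜) :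
    (posSemidef_conjTranspose_mul_self X).sqrt = CFC.abs X := by
  rw [PosSemidef.sqrt_eq_cfcSqrt, CFC.abs, star_eq_conjTranspose]

end Sqrt

lemma trace_mul_mul_star_of_mem_unitary {α : Type*} [CommSemiring α] [StarRing α]
    {u : Matrix m m α} (hu : u ∈ unitary (Matrix m m α)) (M : Matrix m m α) :
    (u * M * star u).trace = M.trace := by
  rw [trace_mul_cycle, Unitary.star_mul_self_of_mem hu, one_mul]

lemma sum_sq_le_trace_of_diagonal {r : m → ℝ} {K X Q : Matrix m m ℝ}
    (hK₁ : -K ≤ diagonal r) (hK₂ : diagonal r ≤ K) (hQ₁ : -Q ≤ X) (hQ₂ : X ≤ Q)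
    (hX : diagonal r * K + K * diagonal r = 2 • X) :
    ∑ i, r i ^ 2 ≤ Q.trace := by
  refine Finset.sum_le_sum fun i _ => ?_
  have hr : |r i| ≤ K i i := by simpa using abs_diag_le_of_neg_le_of_le hK₁ hK₂ i
  have hXi : X i i = r i * K i i := by
    have := congr_fun₂ hX i i
    simp only [add_apply, diagonal_mul, mul_diagonal, smul_apply, nsmul_eq_mul] at this
    push_cast at this
    linarith
  calc r i ^ 2 = |r i| * |r i| := by rw [abs_mul_abs_self, sq]
    _ ≤ |r i| * K i i := mul_le_mul_of_nonneg_left hr (abs_nonneg _)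
    _ = |X i i| := by rw [hXi, abs_mul, abs_of_nonneg ((abs_nonneg _).trans hr)]
    _ ≤ Q i i := abs_diag_le_of_neg_le_of_le hQ₁ hQ₂ i

lemma trace_mul_self_le_trace_of_abs_le {R K X Q : Matrix m m ℝ} (hR : R.IsHermitian)
    (hK₁ : -K ≤ R) (hK₂ : R ≤ K) (hQ₁ : -Q ≤ X) (hQ₂ : X ≤ Q) (hX : R * K + K * R = 2 • X) :
    (R * R).trace ≤ Q.trace := by
  let φ := Unitary.conjStarAlgAut ℝ (Matrix m m ℝ) (star hR.eigenvectorUnitary)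
  have htrace (M : Matrix m m ℝ) : (φ M).trace = M.trace :=
    trace_mul_mul_star_of_mem_unitary (star hR.eigenvectorUnitary).2 M
  have hφR : φ R = diagonal hR.eigenvalues := by
    simpa [RCLike.ofReal_real_eq_id, -Unitary.conjStarAlgAut_apply] using
      hR.conjStarAlgAut_star_eigenvectorUnitary
  have key := sum_sq_le_trace_of_diagonal (K := φ K) (X := φ X) (Q := φ Q)
    (by simpa [hφR] using OrderHomClass.mono φ hK₁) (hφR ▸ OrderHomClass.mono φ hK₂)
    (by simpa using OrderHomClass.mono φ hQ₁) (OrderHomClass.mono φ hQ₂)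
    (by rw [← hφR, ← map_mul, ← map_mul, ← map_add, hX, map_nsmul])
  rw [← htrace (R * R), ← htrace Q, map_mul, hφR, diagonal_mul_diagonal, trace_diagonal]
  simpa only [sq] using key

end Matrix

/-- Powers–Størmer inequality for `α = 1/2`:
`2 Tr(A^{1/2} B^{1/2}) ≥ Tr(A + B − |A − B|)` for PSD matrices `A, B`,
where `|M| = (MᵀM)^{1/2}`. -/
theorem powers_stormer {n : ℕ} (A B : Matrix (Fin n) (Fin n) ℝ)
    (hA : A.PosSemidef) (hB : B.PosSemidef) :
    (A + B - (Matrix.posSemidef_conjTranspose_mul_self (A - B)).sqrt).trace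
      ≤ 2 * (hA.sqrt * hB.sqrt).trace := by
  set S := hA.sqrt
  set T := hB.sqrt
  have hS : 0 ≤ S := hA.sqrt_nonneg
  have hT : 0 ≤ T := hB.sqrt_nonneg
  have hAB : IsSelfAdjoint (A - B) := hA.1.sub hB.1
  have key := trace_mul_self_le_trace_of_abs_le (R := S - T) (K := S + T)
    (hS.isSelfAdjoint.sub hT.isSelfAdjoint)
    (neg_le_iff_add_nonneg.mpr (by simpa [add_add_sub_cancel] using add_nonneg hS hS))
    ((sub_le_self S hT).trans (le_add_of_nonneg_right hT))
    (CFC.neg_abs_le hAB) (CFC.le_abs hAB)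
    (by rw [← hA.sqrt_mul_self, ← hB.sqrt_mul_self]; noncomm_ring)
  have hRR : ((S - T) * (S - T)).trace = A.trace + B.trace - 2 * (S * T).trace := by
    rw [← hA.sqrt_mul_self, ← hB.sqrt_mul_self, sub_mul, mul_sub, mul_sub, trace_sub, trace_sub,
      trace_sub, trace_mul_comm T S]
    ring
  rw [sqrt_conjTranspose_mul_self_eq_abs, trace_sub, trace_add]
  linarith
end

section
/- If g ∈ ℝ^{T−L+1} satisfies H_L(u_d)g = u and H_L(y_d)g = y where (u_d, y_d) is a trajectory of the LTI system x_{k+1}=Ax_k+Bu_k, y_k=Cx_k+Du_k, then y_k = C A^k x̄ + Σ_{j=0}^{k−1} C A^{k−1−j} B u_j + D u_k for x̄ = X g, where X = [x_0, x_1, …, x_{T−L}] collects the states of the data trajectory at each column start; i.e., the combined trajectory is generated by initial state x̄. -/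
open Matrix

lemma mulVec_sum' {m n α : Type*} [Fintype n] [CommRing α] (M : Matrix m n α)
    {ι : Type*} (s : Finset ι) (v : ι → n → α) :
    M.mulVec (∑ i ∈ s, v i) = ∑ i ∈ s, M.mulVec (v i) := by
  simp only [← Matrix.mulVecLin_apply, map_sum]

lemma state_sol {nx nu : ℕ} (A : Matrix (Fin nx) (Fin nx) ℝ) (B : Matrix (Fin nx) (Fin nu) ℝ)
    (ud : ℕ → Fin nu → ℝ) (xd : ℕ → Fin nx → ℝ)
    (hdyn : ∀ k, xd (k + 1) = A.mulVec (xd k) + B.mulVec (ud k)) :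
    ∀ k j, xd (k + j) = (A ^ k).mulVec (xd j)
      + ∑ i ∈ Finset.range k, (A ^ (k - 1 - i) * B).mulVec (ud (i + j)) := by
  intro k
  induction k with
  | zero => intro j; simp
  | succ k ih =>
    intro j
    have h1 : k + 1 + j = (k + j) + 1 := by ring
    rw [h1, hdyn, ih, Finset.sum_range_succ]
    have h2 : ∀ i ∈ Finset.range k, A.mulVec ((A ^ (k - 1 - i) * B).mulVec (ud (i + j)))
        = (A ^ (k + 1 - 1 - i) * B).mulVec (ud (i + j)) := by
      intro i hi
      rw [Finset.mem_range] at hi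
      have h3 : k + 1 - 1 - i = (k - 1 - i) + 1 := by omega
      rw [Matrix.mulVec_mulVec, h3, pow_succ', Matrix.mul_assoc A (A ^ (k-1-i)) B]
    have h4 : k + 1 - 1 - k = 0 := by omega
    rw [mulVec_add, mulVec_sum', Finset.sum_congr rfl h2, Matrix.mulVec_mulVec,
      ← pow_succ', h4]
    simp only [pow_zero, Matrix.one_mul]
    abel

/-- If `g` combines the columns of the Hankel matrices of an LTI data trajectory into
`(u, y)`, then `(u, y)` is generated by the initial state `x̄ = X g`, where `X` collects
the data states at the start of each Hankel column: explicitly, for `k < L`,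
`y_k = C A^k x̄ + ∑_{j<k} C A^{k−1−j} B u_j + D u_k`. -/
theorem hankel_combination_initial_state {nx nu ny T L : ℕ} (hL : L ≤ T)
    (A : Matrix (Fin nx) (Fin nx) ℝ) (B : Matrix (Fin nx) (Fin nu) ℝ)
    (C : Matrix (Fin ny) (Fin nx) ℝ) (D : Matrix (Fin ny) (Fin nu) ℝ)
    (ud : ℕ → Fin nu → ℝ) (yd : ℕ → Fin ny → ℝ) (xd : ℕ → Fin nx → ℝ)
    (hdyn : ∀ k, xd (k + 1) = A.mulVec (xd k) + B.mulVec (ud k))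
    (hout : ∀ k, yd k = C.mulVec (xd k) + D.mulVec (ud k))
    (g : Fin (T - L + 1) → ℝ)
    (u : ℕ → Fin nu → ℝ) (y : ℕ → Fin ny → ℝ)
    (hu : ∀ k, u k = ∑ j, g j • ud (k + j))
    (hy : ∀ k, y k = ∑ j, g j • yd (k + j))
    (xbar : Fin nx → ℝ) (hxbar : xbar = ∑ j : Fin (T - L + 1), g j • xd j) :
    ∀ k < L, y k = (C * A ^ k).mulVec xbar
      + (∑ j ∈ Finset.range k, (C * A ^ (k - 1 - j) * B).mulVec (u j))
      + D.mulVec (u k) := by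
  intro k _
  have hsol := state_sol A B ud xd hdyn k
  rw [hy, hxbar, hu]
  -- rewrite each summand
  have lhs_eq : ∀ j : Fin (T - L + 1), g j • yd (k + (j : ℕ))
      = g j • (C * A ^ k).mulVec (xd j)
        + ∑ i ∈ Finset.range k, g j • (C * A ^ (k - 1 - i) * B).mulVec (ud (i + j))
        + g j • D.mulVec (ud (k + j)) := by
    intro j
    rw [hout, hsol j, mulVec_add, mulVec_sum']
    simp only [smul_add, ← Matrix.mulVec_mulVec, Finset.smul_sum]
  rw [Finset.sum_congr rfl (fun j _ => lhs_eq j)]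
  rw [mulVec_sum']
  simp only [Finset.sum_add_distrib]
  congr 1
  · congr 1
    · refine Finset.sum_congr rfl fun j _ => ?_
      rw [Matrix.mulVec_smul]
    · rw [Finset.sum_comm]
      refine Finset.sum_congr rfl fun i _ => ?_
      rw [hu, mulVec_sum']
      refine Finset.sum_congr rfl fun j _ => ?_
      rw [Matrix.mulVec_smul]
  · rw [mulVec_sum']
    refine Finset.sum_congr rfl fun j _ => ?_
    rw [Matrix.mulVec_smul]
end
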